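/- Let 0 < p < 1 and set u := 1/(1-p). Then for all natural numbers l ≤ n: Σ_{k=l}^{n} Σ_{j=0}^{k} Σ_{m=l}^{k} (-1)^j·(1/k!)·binom(k,j)·binom(k,m)·(k-1)_{k-m}·(p/(p-1))^m·H_n^{(j)}(u)·S₁(m,l) = δ_{n,l}, where δ_{n,l} is the Kronecker delta. -/

import Mathlib

open PowerSeries Finset

noncomputable section

/-- `cN n F = n! * (coefficient of X^n in F)`. -/
def cN (n : ℕ) (F : PowerSeries ℝ) : ℝ := (n.factorial : ℝ) * PowerSeries.coeff n F

/-- Formal substitution `F ∘ G` (faithful when `G` has zero constant coefficient). -/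
def pcomp (F G : PowerSeries ℝ) : PowerSeries ℝ :=
  PowerSeries.mk fun n =>
    ∑ k ∈ Finset.range (n + 1), (PowerSeries.coeff k F) * (PowerSeries.coeff n (G ^ k))

/-- The formal series of log(1+X). -/
def L : PowerSeries ℝ := PowerSeries.mk fun n => if n = 0 then 0 else (-1 : ℝ) ^ (n - 1) / n

/-- Falling factorial `(y)_m`. -/
def ff (y : ℝ) (m : ℕ) : ℝ := ∏ i ∈ Finset.range m, (y - i)

/-- Rising factorial `⟨y⟩_m`. -/
def rf (y : ℝ) (m : ℕ) : ℝ := ∏ i ∈ Finset.range m, (y + i)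

/-- Degenerate falling factorial `(x)_{n,λ}`. -/
def ffl (x : ℝ) (n : ℕ) (lam : ℝ) : ℝ := ∏ i ∈ Finset.range n, (x - i * lam)

/-- Stirling numbers of the second kind. -/
def S2 (n k : ℕ) : ℝ :=
  (k.factorial : ℝ)⁻¹ * ∑ j ∈ Finset.range (k + 1), (-1 : ℝ) ^ (k - j) * (k.choose j) * (j : ℝ) ^ n

/-- The falling factorial polynomial `x(x-1)⋯(x-n+1)`. -/
def fallingPoly (n : ℕ) : Polynomial ℝ := ∏ i ∈ Finset.range n, (Polynomial.X - Polynomial.C (i : ℝ))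

/-- (Signed) Stirling numbers of the first kind. -/
def S1 (n k : ℕ) : ℝ := (fallingPoly n).coeff k

/-- Degenerate Stirling numbers of the second kind. -/
def S2d (lam : ℝ) (n k : ℕ) : ℝ :=
  (k.factorial : ℝ)⁻¹ *
    ∑ j ∈ Finset.range (k + 1), (-1 : ℝ) ^ (k - j) * (k.choose j) * ffl (j : ℝ) n lam

/-- Formal degenerate exponential `e_λ`. -/
def degExp (lam : ℝ) : PowerSeries ℝ := PowerSeries.mk fun n => ffl 1 n lam / n.factorial

/-- Formal degenerate logarithm `Λ_λ` of `1+X`. -/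
def degLog (lam : ℝ) : PowerSeries ℝ :=
  lam⁻¹ • PowerSeries.mk fun n => if n = 0 then 0 else ff lam n / n.factorial

/-- Degenerate Stirling numbers of the first kind. -/
def S1d (lam : ℝ) (n k : ℕ) : ℝ := cN n ((k.factorial : ℝ)⁻¹ • (degLog lam) ^ k)

/-- Binomial series `(1+X)^c`. -/
def binser (c : ℝ) : PowerSeries ℝ := PowerSeries.mk fun n => ff c n / n.factorial

/-- Frobenius–Euler numbers of order `j`. -/
def FE (u : ℝ) (j n : ℕ) : ℝ :=
  cN n (((1 - u) • (PowerSeries.exp ℝ - PowerSeries.C u)⁻¹) ^ j)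

/-!
Put `W = exp X - 1` and `F = (1 - u) / (exp X - u)`, so that `H_n^{(j)}(u) = c_n(F^j)` and, by the
binomial theorem, the sum over `j` is `c_n(y^k)` with `y = 1 - F`. The relation `W F = (1 - u) y`
says that `W` is `(1 - u) X / (1 - X)` with `y` substituted for `X`. Since the coefficients of
`(X / (1 - X))^m / m!` are the Lah numbers `L(k, m) / k!`, this gives
`S₂(n, m) = c_n(W^m) / m! = ∑_k (1 - u)^m L(k, m) / k! c_n(y^k)`, and the whole sum collapses to
`∑_m S₂(n, m) S₁(m, l) = δ_{n,l}`, the orthogonality of the Stirling numbers.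
-/

lemma ff_eq_eval_descPochhammer (x : ℝ) (m : ℕ) : ff x m = (descPochhammer ℝ m).eval x :=
  (descPochhammer_eval_eq_prod_range m x).symm

lemma ff_natCast (N M : ℕ) : ff N M = N.descFactorial M := by
  rw [ff_eq_eval_descPochhammer, descPochhammer_eval_eq_descFactorial]

lemma fallingPoly_eq_descPochhammer (m : ℕ) : fallingPoly m = descPochhammer ℝ m := by
  induction m with
  | zero => simp [fallingPoly]
  | succ m ih => rw [fallingPoly, prod_range_succ, ← fallingPoly, ih, descPochhammer_succ_right,
      map_natCast]

def lah (k m : ℕ) : ℝ := k.choose m * ff ((k : ℝ) - 1) (k - m)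

lemma lah_zero_right_of_pos {k : ℕ} (hk : 0 < k) : lah k 0 = 0 := by
  obtain ⟨k, rfl⟩ := Nat.exists_eq_add_one_of_ne_zero hk.ne'
  rw [lah, show ((k + 1 : ℕ) : ℝ) - 1 = k by push_cast; ring, ff_natCast,
    Nat.descFactorial_of_lt (by omega)]
  simp

lemma factorial_mul_choose_eq_factorial_mul_lah (a b : ℕ) :
    ((a + 1 + b).factorial : ℝ) * (a + b).choose a =
      (a + 1).factorial * lah (a + 1 + b) (a + 1) := by
  rw [lah, show ((a + 1 + b : ℕ) : ℝ) - 1 = (a + b : ℕ) by push_cast; ring, ff_natCast,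
    Nat.add_sub_cancel_left, Nat.descFactorial_eq_factorial_mul_choose,
    Nat.choose_symm_add (a := a), Nat.choose_symm_add (a := a + 1),
    ← Nat.add_choose_mul_factorial_mul_factorial (a + 1) b]
  push_cast
  ring

lemma lah_eq_zero_of_lt {k m : ℕ} (h : k < m) : lah k m = 0 := by
  simp [lah, Nat.choose_eq_zero_of_lt h]

lemma coeff_X_pow_mul_invOneSubPow (k m : ℕ) :
    coeff k (X ^ m * (invOneSubPow ℝ m : ℝ⟦X⟧)) = m.factorial * lah k m / k.factorial := by
  rw [eq_div_iff (by positivity), mul_comm, coeff_X_pow_mul']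
  split_ifs with hmk
  · obtain ⟨b, rfl⟩ := Nat.exists_eq_add_of_le hmk
    rcases m with _ | a
    · rcases b with _ | b
      · simp [lah, ff, invOneSubPow_zero]
      · simp [invOneSubPow_zero, lah_zero_right_of_pos]
    · rw [invOneSubPow_val_succ_eq_mk_add_choose, Nat.add_sub_cancel_left, coeff_mk,
        factorial_mul_choose_eq_factorial_mul_lah]
  · simp [lah_eq_zero_of_lt (not_le.1 hmk)]

lemma coeff_pow_eq_zero_of_lt {y : ℝ⟦X⟧} (hy : constantCoeff y = 0) {n k : ℕ} (h : n < k) :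
    coeff n (y ^ k) = 0 :=
  coeff_of_lt_order _
    ((ENat.natCast_lt_natCast.2 h).trans_le (le_order_pow_of_constantCoeff_eq_zero k hy))

lemma cN_subst {y : ℝ⟦X⟧} (hy : constantCoeff y = 0) (f : ℝ⟦X⟧) (n : ℕ) :
    cN n (f.subst y) = ∑ k ∈ range (n + 1), coeff k f * cN n (y ^ k) := by
  have hsupp : (Function.support fun k => coeff k f • coeff n (y ^ k)) ⊆ range (n + 1) := by
    intro k hk
    by_contra hkn
    simp only [coe_range, Set.mem_Iio, not_lt] at hkn
    exact hk (by simp [coeff_pow_eq_zero_of_lt hy (show n < k by omega)])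
  rw [cN, coeff_subst' (HasSubst.of_constantCoeff_zero' hy),
    finsum_eq_sum_of_support_subset _ hsupp, mul_sum]
  exact sum_congr rfl fun k _ => by rw [cN, smul_eq_mul]; ring

lemma coeff_exp_pow (j n : ℕ) : coeff n (exp ℝ ^ j) = (j : ℝ) ^ n / n.factorial := by
  rw [exp_pow_eq_rescale_exp, coeff_rescale, coeff_exp, map_div₀]
  simp [div_eq_mul_inv]

lemma cN_smul (c : ℝ) (f : ℝ⟦X⟧) (n : ℕ) : cN n (c • f) = c * cN n f := by
  rw [cN, cN, coeff_smul, smul_eq_mul]; ring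

lemma cN_exp_sub_one_pow (n m : ℕ) : cN n ((exp ℝ - 1) ^ m) = m.factorial * S2 n m := by
  rw [sub_eq_add_neg, add_pow, S2, ← mul_assoc, mul_inv_cancel₀ (by positivity), one_mul, cN,
    map_sum, mul_sum]
  refine sum_congr rfl fun j _ => ?_
  rw [← map_natCast (C (R := ℝ)), ← map_one (C (R := ℝ)), ← map_neg, ← map_pow, mul_assoc,
    ← map_mul, coeff_mul_C, coeff_exp_pow]
  field_simp

lemma sum_neg_one_pow_mul_choose_mul_cN_pow (F : ℝ⟦X⟧) (n k : ℕ) :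
    ∑ j ∈ range (k + 1), (-1 : ℝ) ^ j * k.choose j * cN n (F ^ j) = cN n ((1 - F) ^ k) := by
  rw [show 1 - F = -F + 1 by ring, add_pow, cN, map_sum, mul_sum]
  refine sum_congr rfl fun j _ => ?_
  rw [one_pow, mul_one, neg_pow F, ← map_natCast (C (R := ℝ)), ← map_one (C (R := ℝ)), ← map_neg,
    ← map_pow, coeff_mul_C, mul_comm, coeff_C_mul, cN]
  ring

lemma S2_eq_zero_of_lt {n m : ℕ} (h : n < m) : S2 n m = 0 := by
  have hW : constantCoeff (exp ℝ - 1 : ℝ⟦X⟧) = 0 := by simp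
  have := cN_exp_sub_one_pow n m
  rw [cN, coeff_pow_eq_zero_of_lt hW h, mul_zero] at this
  exact (mul_eq_zero.1 this.symm).resolve_left (by positivity)

lemma S1_eq_zero_of_lt {m l : ℕ} (h : m < l) : S1 m l = 0 := by
  rw [S1, fallingPoly_eq_descPochhammer]
  exact Polynomial.coeff_eq_zero_of_natDegree_lt (by rwa [descPochhammer_natDegree])

lemma natCast_pow_eq_sum_S2_mul_ff (n N : ℕ) :
    (N : ℝ) ^ n = ∑ m ∈ range (n + 1), S2 n m * ff N m := by
  have hexp : cN n (exp ℝ ^ N) = ∑ m ∈ range (N + 1), S2 n m * ff N m := by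
    rw [show exp ℝ = (exp ℝ - 1) + 1 by ring, add_pow, cN, map_sum, mul_sum]
    refine sum_congr rfl fun m _ => ?_
    rw [one_pow, mul_one, ← map_natCast (C (R := ℝ)), coeff_mul_C, ← mul_assoc, ← cN,
      cN_exp_sub_one_pow, ff_natCast, Nat.descFactorial_eq_factorial_mul_choose]
    push_cast
    ring
  have hn : ∑ m ∈ range (n + 1), S2 n m * ff N m = ∑ m ∈ range (n + N + 1), S2 n m * ff N m :=
    sum_subset (range_subset_range.2 (by omega)) fun m _ hm => by
      rw [S2_eq_zero_of_lt (by simp at hm; omega), zero_mul]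
  have hN : ∑ m ∈ range (N + 1), S2 n m * ff N m = ∑ m ∈ range (n + N + 1), S2 n m * ff N m :=
    sum_subset (range_subset_range.2 (by omega)) fun m _ hm => by
      rw [ff_natCast, Nat.descFactorial_of_lt (by simp at hm; omega), Nat.cast_zero, mul_zero]
  rw [hn, ← hN, ← hexp, cN, coeff_exp_pow]
  field_simp

lemma sum_C_S2_mul_descPochhammer (n : ℕ) :
    ∑ m ∈ range (n + 1), Polynomial.C (S2 n m) * descPochhammer ℝ m = Polynomial.X ^ n := by
  refine Polynomial.eq_of_infinite_eval_eq _ _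
    (Set.infinite_of_injective_forall_mem Nat.cast_injective fun N : ℕ => ?_)
  simp [Polynomial.eval_finsetSum, ← ff_eq_eval_descPochhammer, natCast_pow_eq_sum_S2_mul_ff]

lemma sum_S2_mul_S1 (n l : ℕ) :
    ∑ m ∈ range (n + 1), S2 n m * S1 m l = if n = l then 1 else 0 := by
  have := congrArg (Polynomial.coeff · l) (sum_C_S2_mul_descPochhammer n)
  simpa [Polynomial.finsetSum_coeff, Polynomial.coeff_X_pow, S1, fallingPoly_eq_descPochhammer,
    eq_comm] using this

def frobeniusEulerSeries (u : ℝ) : ℝ⟦X⟧ := (1 - u) • (exp ℝ - C u)⁻¹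

lemma frobeniusEulerSeries_mul_exp_sub_C {u : ℝ} (hu : u ≠ 1) :
    frobeniusEulerSeries u * (exp ℝ - C u) = C (1 - u) := by
  have hconst : constantCoeff (exp ℝ - C u) ≠ 0 := by
    simpa [sub_eq_zero] using hu.symm
  rw [frobeniusEulerSeries, smul_mul_assoc, PowerSeries.inv_mul_cancel _ hconst, smul_eq_C_mul,
    mul_one]

lemma constantCoeff_one_sub_frobeniusEulerSeries {u : ℝ} (hu : u ≠ 1) :
    constantCoeff (1 - frobeniusEulerSeries u) = 0 := by
  have h := congrArg constantCoeff (frobeniusEulerSeries_mul_exp_sub_C hu)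
  rw [map_mul, map_sub, constantCoeff_exp, constantCoeff_C, constantCoeff_C] at h
  rw [map_sub, map_one, mul_left_eq_self₀.1 h |>.resolve_right (sub_ne_zero.2 hu.symm), sub_self]

lemma exp_sub_one_mul_frobeniusEulerSeries {u : ℝ} (hu : u ≠ 1) :
    (exp ℝ - 1) * frobeniusEulerSeries u = (1 - u) • (1 - frobeniusEulerSeries u) := by
  have h := frobeniusEulerSeries_mul_exp_sub_C hu
  rw [map_sub, map_one] at h
  rw [smul_eq_C_mul, map_sub, map_one]
  linear_combination h

lemma exp_sub_one_pow_eq_smul_subst {u : ℝ} (hu : u ≠ 1) (m : ℕ) :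
    (exp ℝ - 1) ^ m = (1 - u) ^ m •
      (X ^ m * (invOneSubPow ℝ m : ℝ⟦X⟧)).subst (1 - frobeniusEulerSeries u) := by
  set F := frobeniusEulerSeries u
  have hy : HasSubst (1 - F) :=
    HasSubst.of_constantCoeff_zero' (constantCoeff_one_sub_frobeniusEulerSeries hu)
  have hφ : ∀ f : ℝ⟦X⟧, f.subst (1 - F) = substAlgHom (R := ℝ) hy f := fun f => by
    rw [coe_substAlgHom]
  have hinv : (invOneSubPow ℝ m : ℝ⟦X⟧).subst (1 - F) * F ^ m = 1 := by
    have := congrArg (substAlgHom (R := ℝ) hy) (invOneSubPow ℝ m).val_inv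
    rwa [invOneSubPow_inv_eq_one_sub_pow, map_mul, map_pow, map_sub, map_one, substAlgHom_X,
      sub_sub_cancel, ← hφ] at this
  rw [hφ, map_mul, map_pow, substAlgHom_X, ← hφ]
  calc (exp ℝ - 1) ^ m
      = ((exp ℝ - 1) * F) ^ m * (invOneSubPow ℝ m : ℝ⟦X⟧).subst (1 - F) := by
        rw [mul_pow, mul_assoc, mul_comm (F ^ m), hinv, mul_one]
    _ = _ := by rw [exp_sub_one_mul_frobeniusEulerSeries hu, smul_pow, smul_mul_assoc]

lemma S2_eq_sum_lah {u : ℝ} (hu : u ≠ 1) (n m : ℕ) :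
    S2 n m = ∑ k ∈ range (n + 1),
      (1 - u) ^ m * lah k m / k.factorial * cN n ((1 - frobeniusEulerSeries u) ^ k) := by
  have h := cN_exp_sub_one_pow n m
  rw [exp_sub_one_pow_eq_smul_subst hu, cN_smul,
    cN_subst (constantCoeff_one_sub_frobeniusEulerSeries hu)] at h
  refine mul_left_cancel₀ (by positivity : (m.factorial : ℝ) ≠ 0) ?_
  rw [← h, mul_sum, mul_sum]
  refine sum_congr rfl fun k _ => ?_
  rw [coeff_X_pow_mul_invOneSubPow]
  ring

lemma sum_Icc_sum_Icc_eq_sum_range_sum_range {M : Type*} [AddCommMonoid M] {f : ℕ → ℕ → M}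
    {l : ℕ} (hf : ∀ k m, m < l ∨ k < m → f k m = 0) (n : ℕ) :
    ∑ k ∈ Icc l n, ∑ m ∈ Icc l k, f k m = ∑ k ∈ range (n + 1), ∑ m ∈ range (n + 1), f k m := by
  have hinner : ∀ k ∈ range (n + 1), ∑ m ∈ Icc l k, f k m = ∑ m ∈ range (n + 1), f k m :=
    fun k hk => sum_subset (fun m hm => by simp at hk hm ⊢; omega) fun m _ hm =>
      hf k m (by simp at hm; omega)
  rw [← sum_congr rfl hinner]
  exact sum_subset (fun k hk => by simp at hk ⊢; omega) fun k hkn hk =>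
    sum_eq_zero fun m hm => hf k m (by simp at hkn hk hm; omega)

theorem sum_lah_FE_S1 {u : ℝ} (hu : u ≠ 1) (n l : ℕ) :
    ∑ k ∈ Icc l n, ∑ j ∈ range (k + 1), ∑ m ∈ Icc l k,
        (-1 : ℝ) ^ j * (k.factorial : ℝ)⁻¹ * (k.choose j : ℝ) * (k.choose m : ℝ) *
          ff ((k : ℝ) - 1) (k - m) * (1 - u) ^ m * FE u j n * S1 m l
      = if n = l then 1 else 0 := by
  set y := 1 - frobeniusEulerSeries u
  calc _ = ∑ k ∈ Icc l n, ∑ m ∈ Icc l k,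
        S1 m l * ((1 - u) ^ m * lah k m / k.factorial * cN n (y ^ k)) := by
        refine sum_congr rfl fun k _ => ?_
        rw [sum_comm]
        refine sum_congr rfl fun m _ => ?_
        rw [← sum_neg_one_pow_mul_choose_mul_cN_pow, mul_sum, mul_sum]
        refine sum_congr rfl fun j _ => ?_
        rw [FE, lah, frobeniusEulerSeries]
        ring
    _ = ∑ m ∈ range (n + 1), S2 n m * S1 m l := by
        rw [sum_Icc_sum_Icc_eq_sum_range_sum_range, sum_comm]
        · refine sum_congr rfl fun m _ => ?_
          rw [← mul_sum, S2_eq_sum_lah hu, mul_comm]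
        · rintro k m (hml | hkm)
          · rw [S1_eq_zero_of_lt hml, zero_mul]
          · rw [lah_eq_zero_of_lt hkm, mul_zero, zero_div, zero_mul, mul_zero]
    _ = _ := sum_S2_mul_S1 n l

theorem stmt18_general (p : ℝ) (hp0 : 0 < p) (hp1 : p < 1) (u : ℝ) (hu : u = 1 / (1 - p))
    (n l : ℕ) :
    (∑ k ∈ Finset.Icc l n, ∑ j ∈ Finset.range (k + 1), ∑ m ∈ Finset.Icc l k,
        (-1 : ℝ) ^ j * (k.factorial : ℝ)⁻¹ * (k.choose j : ℝ) * (k.choose m : ℝ) *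
          ff ((k : ℝ) - 1) (k - m) * (p / (p - 1)) ^ m * FE u j n * S1 m l)
      = (if n = l then (1 : ℝ) else 0) := by
  have hp : 1 - p ≠ 0 := by linarith
  have hV : p / (p - 1) = 1 - u := by
    rw [hu, div_eq_iff (by linarith)]
    field_simp
    ring
  have hu1 : u ≠ 1 := by
    rw [hu, ne_eq, div_eq_one_iff_eq hp]
    linarith
  rw [hV]
  exact sum_lah_FE_S1 hu1 n l

theorem stmt18 (p : ℝ) (hp0 : 0 < p) (hp1 : p < 1) (u : ℝ) (hu : u = 1 / (1 - p))
    (n l : ℕ) (hln : l ≤ n) :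
    (∑ k ∈ Finset.Icc l n, ∑ j ∈ Finset.range (k + 1), ∑ m ∈ Finset.Icc l k,
        (-1 : ℝ) ^ j * (k.factorial : ℝ)⁻¹ * (k.choose j : ℝ) * (k.choose m : ℝ) *
          ff ((k : ℝ) - 1) (k - m) * (p / (p - 1)) ^ m * FE u j n * S1 m l)
      = (if n = l then (1 : ℝ) else 0) :=
  stmt18_general p hp0 hp1 u hu n l
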